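/- Let d, m, n be positive natural numbers with m ≤ n. Identify (ℂ^d)^{⊗n} with (ℂ^d)^{⊗m} ⊗ (ℂ^d)^{⊗(n−m)} by indexing with ((Fin m → Fin d) × (Fin (n−m) → Fin d)) and letting permutations of Fin m ⊕ Fin (n−m) act; let Π_sym^{n,d} = (1/n!) · Σ over all σ ∈ Equiv.Perm (Fin m ⊕ Fin (n−m)) of P_σ, and let Π_sym^{m,d} = (1/m!) · Σ_{σ ∈ Equiv.Perm (Fin m)} P_σ. Then the partial trace of Π_sym^{n,d} over the second factor (Fin (n−m) → Fin d) equals (d[n] / d[m]) · Π_sym^{m,d}, where d[k] = (k + d − 1).choose k. -/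

import Mathlib

/-!
The `(a, a')` entry of `∑ σ, P_σ` counts the permutations `σ` with `a ∘ σ = a'`: it vanishes
unless `a` and `a'` take each value `j` equally often, and then equals `∏ j, (#a⁻¹{j})!`.
Tracing out the last `k = n - m` factors of the split symmetrizer therefore sums
`∏ j, (#a⁻¹{j} + #b⁻¹{j})!` over all words `b` of length `k`; adding one letter at a time shows that
this sum is the rising factorial `(m + d) (m + d + 1) ⋯ (m + d + k - 1)` times `∏ j, (#a⁻¹{j})!`.
Since `d[n] * n! = d (d + 1) ⋯ (d + n - 1)`, the resulting scalar is `d[n] / d[m]`.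
-/

open Matrix

/-- Permutation matrix of `σ` acting on `(ℂ^d)^{⊗ι}`, indexed by `ι → Fin d`. -/
noncomputable def permMatrix (d : ℕ) {ι : Type*} [Fintype ι] [DecidableEq ι]
    (σ : Equiv.Perm ι) : Matrix (ι → Fin d) (ι → Fin d) ℂ :=
  Matrix.of fun a b => if a ∘ σ = b then 1 else 0

/-- The symmetrizer on `(ℂ^d)^{⊗m}`. -/
noncomputable def symmetrizer (d m : ℕ) :
    Matrix (Fin m → Fin d) (Fin m → Fin d) ℂ :=
  ((m.factorial : ℂ)⁻¹) • ∑ σ : Equiv.Perm (Fin m), permMatrix d σ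

/-- The symmetrizer on `(ℂ^d)^{⊗m} ⊗ (ℂ^d)^{⊗k}`, with permutations of `Fin m ⊕ Fin k`
acting on the product index `(Fin m → Fin d) × (Fin k → Fin d)`. -/
noncomputable def symmetrizerSplit (d m k : ℕ) :
    Matrix ((Fin m → Fin d) × (Fin k → Fin d)) ((Fin m → Fin d) × (Fin k → Fin d)) ℂ :=
  (((m + k).factorial : ℂ)⁻¹) • ∑ σ : Equiv.Perm (Fin m ⊕ Fin k),
    Matrix.of fun p q =>
      if Sum.elim p.1 p.2 ∘ σ = Sum.elim q.1 q.2 then (1 : ℂ) else 0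

/-- Partial trace over the second tensor factor. -/
noncomputable def partialTraceSnd {α β : Type*} [Fintype β]
    (X : Matrix (α × β) (α × β) ℂ) : Matrix α α ℂ :=
  Matrix.of fun a a' => ∑ b, X (a, b) (a', b)

open Finset Nat

section FiberCard

variable {ι κ : Type*} [Fintype ι] [DecidableEq κ]

def fiberCard (c : ι → κ) (j : κ) : ℕ :=
  Fintype.card {x // c x = j}

lemma fiberCard_eq_card_filter (c : ι → κ) (j : κ) : fiberCard c j = #{x | c x = j} :=
  Fintype.card_subtype _

lemma fiberCard_sumElim {ι' : Type*} [Fintype ι'] (a : ι → κ) (b : ι' → κ) :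
    fiberCard (Sum.elim a b) = fiberCard a + fiberCard b := by
  ext j
  exact (Fintype.card_congr Equiv.subtypeSum).trans Fintype.card_sum

lemma sum_fiberCard [Fintype κ] (c : ι → κ) : ∑ j, fiberCard c j = Fintype.card ι := by
  simp only [fiberCard_eq_card_filter]
  exact (card_eq_sum_card_fiberwise fun x _ => mem_univ (c x)).symm

lemma fiberCard_cons {k : ℕ} (x : κ) (b : Fin k → κ) :
    fiberCard (Fin.cons x b : Fin (k + 1) → κ) = fiberCard b + Pi.single x 1 := by
  ext j
  simp only [fiberCard_eq_card_filter, card_filter, Fin.sum_univ_succ, Fin.cons_zero,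
    Fin.cons_succ, Pi.add_apply, Pi.single_apply, eq_comm (a := j)]
  rw [add_comm]

end FiberCard

section PermCount

variable {ι κ : Type*} [Fintype ι] [DecidableEq ι] [DecidableEq κ]

def permCompEquiv (c c' : ι → κ) :
    {σ : Equiv.Perm ι // c ∘ σ = c'} ≃ ∀ j, ({x // c' x = j} ≃ {x // c x = j}) where
  toFun σ j := σ.1.subtypeEquiv fun x => by rw [← congrFun σ.2 x, Function.comp_apply]
  invFun e := ⟨(Equiv.sigmaFiberEquiv c').symm.trans
      ((Equiv.sigmaCongrRight e).trans (Equiv.sigmaFiberEquiv c)),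
    funext fun x => (e (c' x) ⟨x, rfl⟩).2⟩
  left_inv σ := rfl
  right_inv e := by
    funext j
    ext ⟨x, rfl⟩
    rfl

lemma card_perm_comp_eq [Fintype κ] (c c' : ι → κ) :
    Fintype.card {σ : Equiv.Perm ι // c ∘ σ = c'} =
      if fiberCard c = fiberCard c' then ∏ j, (fiberCard c j)! else 0 := by
  rw [Fintype.card_congr (permCompEquiv c c'), Fintype.card_pi]
  split_ifs with h
  · refine prod_congr rfl fun j _ => ?_
    rw [Fintype.card_equiv (Fintype.equivOfCardEq (congrFun h j).symm)]
    exact congrArg _ (congrFun h j).symm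
  · obtain ⟨j, hj⟩ := Function.ne_iff.mp h
    refine prod_eq_zero (mem_univ j) (Fintype.card_eq_zero_iff.mpr ⟨fun e => hj ?_⟩)
    exact Fintype.card_congr e.symm

lemma sum_perm_ite_comp_eq [Fintype κ] (c c' : ι → κ) :
    (∑ σ : Equiv.Perm ι, if c ∘ σ = c' then (1 : ℂ) else 0) =
      if fiberCard c = fiberCard c' then ∏ j, ((fiberCard c j)! : ℂ) else 0 := by
  rw [sum_boole, ← Fintype.card_subtype, card_perm_comp_eq]
  split_ifs <;> simp

end PermCount

section OccupationSum

variable {κ : Type*} [Fintype κ] [DecidableEq κ]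

lemma prod_factorial_add_single (C : κ → ℕ) (x : κ) :
    ∏ j, (C j + (Pi.single x 1 : κ → ℕ) j)! = (C x + 1) * ∏ j, (C j)! := by
  rw [← mul_prod_erase univ _ (mem_univ x), ← mul_prod_erase univ _ (mem_univ x),
    Pi.single_eq_same, factorial_succ, mul_assoc]
  congr 2
  refine prod_congr rfl fun j hj => ?_
  rw [Pi.single_eq_of_ne (ne_of_mem_erase hj), add_zero]

/-- Appending a letter `x` to `b` multiplies the product by `A x + fiberCard b x + 1`, and these
factors sum to `∑ j, A j + |κ| + k` over `x`. -/
lemma sum_prod_factorial_add_fiberCard (A : κ → ℕ) (k : ℕ) :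
    ∑ b : Fin k → κ, ∏ j, (A j + fiberCard b j)! =
      (∑ j, A j + Fintype.card κ).ascFactorial k * ∏ j, (A j)! := by
  induction k with
  | zero => simp [fiberCard]
  | succ k ih =>
    have sum_succ : ∀ b : Fin k → κ, ∑ x, (A x + fiberCard b x + 1) =
        ∑ j, A j + Fintype.card κ + k := by
      intro b
      simp only [sum_add_distrib, sum_fiberCard, sum_const, Finset.card_univ, Fintype.card_fin,
        smul_eq_mul, mul_one]
      ring
    calc ∑ b : Fin (k + 1) → κ, ∏ j, (A j + fiberCard b j)!
        = ∑ b : Fin k → κ, ∑ x, ∏ j, (A j + fiberCard (Fin.cons x b : Fin (k + 1) → κ) j)! := by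
          rw [← Fintype.sum_equiv (Fin.consEquiv fun _ => κ) _ _ fun _ => rfl,
            Fintype.sum_prod_type_right]
          rfl
      _ = ∑ b : Fin k → κ, (∑ j, A j + Fintype.card κ + k) * ∏ j, (A j + fiberCard b j)! := by
          refine sum_congr rfl fun b _ => ?_
          simp only [fiberCard_cons, Pi.add_apply, ← add_assoc, prod_factorial_add_single,
            ← sum_mul, sum_succ]
      _ = (∑ j, A j + Fintype.card κ).ascFactorial (k + 1) * ∏ j, (A j)! := by
          rw [← mul_sum, ih, ascFactorial_succ, mul_assoc]

end OccupationSum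

/-- Both sides are the rising factorial `d (d + 1) ⋯ (d + m + k - 1)`, as `d[n] * n!` is
`d (d + 1) ⋯ (d + n - 1)`. -/
lemma factorial_mul_choose_mul_ascFactorial (d m k : ℕ) :
    m ! * (m + d - 1).choose m * (m + d).ascFactorial k =
      (m + k)! * (m + k + d - 1).choose (m + k) := by
  rw [add_comm m d, add_comm (m + k) d, ← ascFactorial_eq_factorial_mul_choose',
    ← ascFactorial_eq_factorial_mul_choose', ascFactorial_mul_ascFactorial]

lemma symmetrizer_apply (d m : ℕ) (a a' : Fin m → Fin d) :
    symmetrizer d m a a' =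
      (m ! : ℂ)⁻¹ * if fiberCard a = fiberCard a' then ∏ j, ((fiberCard a j)! : ℂ) else 0 := by
  simp only [symmetrizer, permMatrix, Matrix.smul_apply, Matrix.sum_apply, of_apply, smul_eq_mul,
    sum_perm_ite_comp_eq]

lemma partialTraceSnd_symmetrizerSplit (d m k : ℕ) :
    partialTraceSnd (symmetrizerSplit d m k) =
      (((m + k)! : ℂ)⁻¹ * (m + d).ascFactorial k * m !) • symmetrizer d m := by
  ext a a'
  simp only [partialTraceSnd, symmetrizerSplit, of_apply, Matrix.smul_apply, Matrix.sum_apply,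
    smul_eq_mul, sum_perm_ite_comp_eq, fiberCard_sumElim, add_left_inj, symmetrizer_apply,
    ← mul_sum]
  split_ifs with h
  · have hsum := sum_prod_factorial_add_fiberCard (fiberCard a) k
    rw [sum_fiberCard, Fintype.card_fin, Fintype.card_fin] at hsum
    simp only [Pi.add_apply, ← Nat.cast_prod, ← Nat.cast_sum, hsum]
    have hfact : (m ! : ℂ) ≠ 0 := Nat.cast_ne_zero.mpr (factorial_ne_zero m)
    push_cast
    field_simp
  · simp

theorem partialTrace_symmetrizer_general (d m n : ℕ) (hd : 0 < d) (hmn : m ≤ n) :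
    partialTraceSnd (symmetrizerSplit d m (n - m))
      = (((n + d - 1).choose n : ℂ) / ((m + d - 1).choose m : ℂ)) • symmetrizer d m := by
  obtain ⟨k, rfl⟩ := exists_add_of_le hmn
  rw [Nat.add_sub_cancel_left, partialTraceSnd_symmetrizerSplit]
  congr 1
  have hchoose : ((m + d - 1).choose m : ℂ) ≠ 0 :=
    Nat.cast_ne_zero.mpr (Nat.choose_pos (by omega)).ne'
  have hfact : ((m + k)! : ℂ) ≠ 0 := Nat.cast_ne_zero.mpr (factorial_ne_zero _)
  field_simp
  rw [mul_rotate]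
  exact_mod_cast factorial_mul_choose_mul_ascFactorial d m k

theorem partialTrace_symmetrizer (d m n : ℕ) (hd : 0 < d) (hm : 0 < m) (hn : 0 < n)
    (hmn : m ≤ n) :
    partialTraceSnd (symmetrizerSplit d m (n - m))
      = (((n + d - 1).choose n : ℂ) / ((m + d - 1).choose m : ℂ)) • symmetrizer d m :=
  partialTrace_symmetrizer_general d m n hd hmn
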